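/- arXiv:2007.10165 — 2 statements merged into one kernel-verified Lean document; each statement's English description precedes it below -/
import Mathlib

section
/- Let T ∈ R_d be a form of degree d in n+1 variables and let A, B ⊂ ℙⁿ be disjoint finite sets, each non-redundant and computing T. Set Z = A ∪ B. Then Dh_Z(d+1) > 0, i.e. h_Z(d+1) > h_Z(d). -/
open MvPolynomial BigOperators

noncomputable section

/-- The linear form `a₀x₀ + ⋯ + a_{N-1}x_{N-1}` associated to a coefficient vector. -/
def linForm {N : ℕ} (v : Fin N → ℂ) : MvPolynomial (Fin N) ℂ :=
  ∑ i, C (v i) * X i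

/-- A finite set of nonzero, pairwise non-proportional vectors, representing a finite
set of points in projective space. -/
def ValidPoints {N : ℕ} (A : Finset (Fin N → ℂ)) : Prop :=
  (∀ v ∈ A, v ≠ 0) ∧ ∀ v ∈ A, ∀ w ∈ A, v ≠ w → ∀ c : ℂ, w ≠ c • v

/-- Two sets of points are (projectively) disjoint: no vector of one is proportional to a
vector of the other. -/
def ProjDisjoint {N : ℕ} (A B : Finset (Fin N → ℂ)) : Prop :=
  ∀ v ∈ A, ∀ w ∈ B, ∀ c : ℂ, w ≠ c • v

/-- Two sets of points coincide as sets of projective points. -/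
def ProjEq {N : ℕ} (A B : Finset (Fin N → ℂ)) : Prop :=
  (∀ v ∈ A, ∃ w ∈ B, ∃ c : ℂ, w = c • v) ∧ (∀ w ∈ B, ∃ v ∈ A, ∃ c : ℂ, w = c • v)

/-- `A` computes the degree-`d` form `T`: `T` lies in the span of the `d`-th powers of the
linear forms associated to the points of `A`. -/
def Computes {N : ℕ} (A : Finset (Fin N → ℂ)) (d : ℕ) (T : MvPolynomial (Fin N) ℂ) : Prop :=
  T ∈ Submodule.span ℂ ((fun v => linForm v ^ d) '' (A : Set (Fin N → ℂ)))

/-- `A` is a non-redundant decomposition of `T`: it computes `T` and no proper subset does. -/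
def NonRedundant {N : ℕ} (A : Finset (Fin N → ℂ)) (d : ℕ)
    (T : MvPolynomial (Fin N) ℂ) : Prop :=
  Computes A d T ∧ ∀ A' ⊂ A, ¬ Computes A' d T

/-- The evaluation map on forms of degree `j`. -/
def evalMap {N : ℕ} (A : Finset (Fin N → ℂ)) (j : ℕ) :
    (homogeneousSubmodule (Fin N) ℂ j) →ₗ[ℂ] (↥A → ℂ) :=
  LinearMap.pi fun v : ↥A =>
    (aeval (v.1 : Fin N → ℂ)).toLinearMap ∘ₗ (homogeneousSubmodule (Fin N) ℂ j).subtype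

/-- The Hilbert function of a finite set of points: the rank of the evaluation map in each
degree, and `0` in negative degrees. -/
def hilb {N : ℕ} (A : Finset (Fin N → ℂ)) (j : ℤ) : ℤ :=
  if j < 0 then 0 else (Module.finrank ℂ (LinearMap.range (evalMap A j.toNat)) : ℤ)

/-- The first difference of the Hilbert function. -/
def Dhilb {N : ℕ} (A : Finset (Fin N → ℂ)) (j : ℤ) : ℤ :=
  hilb A j - hilb A (j - 1)

/-- `Dhilb Z` takes the values prescribed by the list `l` in degrees `0, …, l.length - 1`. -/
def DhProfile {N : ℕ} (Z : Finset (Fin N → ℂ)) (l : List ℤ) : Prop :=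
  ∀ j : ℕ, j < l.length → Dhilb Z (j : ℤ) = l.getD j 0

/-- The homogeneous ideal of a finite set of points: all polynomials vanishing at every
representative vector. -/
def pointsIdeal {N : ℕ} (A : Finset (Fin N → ℂ)) : Ideal (MvPolynomial (Fin N) ℂ) :=
  ⨅ v ∈ A, RingHom.ker (eval v)

/-- The degree-`j` graded piece `(I_A)_j` of the homogeneous ideal of `A`, as a
`ℂ`-subspace of the polynomial ring. -/
def idealPiece {N : ℕ} (A : Finset (Fin N → ℂ)) (j : ℕ) :
    Submodule ℂ (MvPolynomial (Fin N) ℂ) :=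
  (Submodule.restrictScalars ℂ (pointsIdeal A)) ⊓ homogeneousSubmodule (Fin N) ℂ j

/-- The `d`-th Kruskal rank of `A`: the largest `k` (at most `ℓ(A)`) such that for every
subset `A' ⊆ A` with `ℓ(A') ≤ k` the powers `{L_v^d : v ∈ A'}` are linearly independent. -/
def kruskalRank {N : ℕ} (A : Finset (Fin N → ℂ)) (d : ℕ) : ℕ :=
  sSup {k : ℕ | k ≤ A.card ∧ ∀ A' ⊆ A, A'.card ≤ k →
    LinearIndependent ℂ (fun v : ↥A' => linForm (v.1 : Fin N → ℂ) ^ d)}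

/-- The Cayley–Bacharach property `CB(i)`: every form of degree `i` vanishing on `Z`
minus one point also vanishes at that point. -/
def CayleyBacharach {N : ℕ} (Z : Finset (Fin N → ℂ)) (i : ℕ) : Prop :=
  ∀ P ∈ Z, ∀ F : MvPolynomial (Fin N) ℂ, F.IsHomogeneous i →
    (∀ v ∈ Z.erase P, eval v F = 0) → eval P F = 0

end

/-!
If `h_Z(d+1) ≤ h_Z(d)`, multiplication by a linear form `ℓ₀` not vanishing on `Z` maps the
degree-`d` value space of `Z` onto the degree-`(d+1)` one, so the former is stable under
multiplication by every ratio `ℓ / ℓ₀` of linear forms. Products of such ratios separate a point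
`a ∈ A` from the rest of `Z`, which yields a form `F` of degree `d` vanishing on `Z ∖ {a}` but not
at `a`. The apolarity pairing with `F` satisfies `⟨F, L_v^d⟩ = F(v)`: it kills `T` because `B`
computes `T`, and kills `L_v^d` for `v ∈ A ∖ {a}` but not `L_a^d`. Hence `A ∖ {a}` already
computes `T`, contradicting non-redundancy.
-/

section LinearAlgebra

variable {K ι : Type*} [Field K] [Fintype ι] [DecidableEq ι]

lemma exists_dotProduct_ne_zero [Infinite K] (Z : Finset (ι → K)) (hZ : ∀ z ∈ Z, z ≠ 0) :
    ∃ u : ι → K, ∀ z ∈ Z, u ⬝ᵥ z ≠ 0 := by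
  by_contra! h
  have hcover : ⋃ z : Z, (LinearMap.ker (dotProductEquiv K ι z) : Set (ι → K)) =
      Set.univ := by
    refine Set.eq_univ_of_forall fun u => ?_
    obtain ⟨z, hz, huz⟩ := h u
    exact Set.mem_iUnion.2 ⟨⟨z, hz⟩, by simpa [dotProduct_comm] using huz⟩
  obtain ⟨z, hz⟩ := Subspace.exists_eq_top_of_iUnion_eq_univ hcover
  rw [LinearMap.ker_eq_top, LinearEquiv.map_eq_zero_iff] at hz
  exact hZ z z.2 hz

lemma exists_dotProduct_eq_zero_ne_zero {z z' : ι → K} (hz : ∀ c : K, z ≠ c • z') :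
    ∃ u : ι → K, u ⬝ᵥ z' = 0 ∧ u ⬝ᵥ z ≠ 0 := by
  have hnot : z ∉ Submodule.span K {z'} := by
    rw [Submodule.mem_span_singleton]
    rintro ⟨c, rfl⟩
    exact hz c rfl
  obtain ⟨f, hfz, hker⟩ := Submodule.exists_le_ker_of_notMem hnot
  refine ⟨(dotProductEquiv K ι).symm f, ?_, ?_⟩ <;>
    rw [← dotProductEquiv_apply_apply, LinearEquiv.apply_symm_apply]
  · exact hker (Submodule.mem_span_singleton_self z')
  · exact hfz

end LinearAlgebra

lemma Submodule.mem_span_of_mem_span_insert_of_apply_eq_zero {K M : Type*} [Field K]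
    [AddCommGroup M] [Module K M] (φ : M →ₗ[K] K) {x y : M} {s : Set M}
    (hy : y ∈ Submodule.span K (insert x s)) (hs : Submodule.span K s ≤ LinearMap.ker φ)
    (hx : φ x ≠ 0) (hφy : φ y = 0) : y ∈ Submodule.span K s := by
  obtain ⟨a, z, hz, rfl⟩ := Submodule.mem_span_insert.1 hy
  have ha : a = 0 := by
    simpa [LinearMap.mem_ker.1 (hs hz), hx] using hφy
  simpa [ha] using hz

lemma Submodule.prod_mul_mem {ι α R : Type*} [CommRing R] {V : Submodule R (ι → R)}
    (s : Finset α) (h : α → ι → R) (hh : ∀ a ∈ s, ∀ f ∈ V, h a * f ∈ V) {f : ι → R}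
    (hf : f ∈ V) : (∏ a ∈ s, h a) * f ∈ V := by
  induction s using Finset.cons_induction with
  | empty => simpa using hf
  | cons a s ha ih =>
    rw [Finset.prod_cons, mul_assoc]
    exact hh a (s.mem_cons_self a) _ (ih fun b hb => hh b (Finset.mem_cons_of_mem hb))

section Evaluation

variable {N : ℕ}

lemma eval_linForm (v x : Fin N → ℂ) : eval x (linForm v) = v ⬝ᵥ x := by
  simp [linForm, dotProduct]

lemma isHomogeneous_linForm (v : Fin N → ℂ) : (linForm v).IsHomogeneous 1 :=
  IsHomogeneous.sum _ _ _ fun i _ => (isHomogeneous_X ℂ i).C_mul _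

lemma evalMap_apply (Z : Finset (Fin N → ℂ)) (j : ℕ) (F : homogeneousSubmodule (Fin N) ℂ j)
    (z : Z) : evalMap Z j F z = eval (z : Fin N → ℂ) (F : MvPolynomial (Fin N) ℂ) := by
  simp [evalMap]

lemma mem_range_evalMap {Z : Finset (Fin N → ℂ)} {j : ℕ} {f : Z → ℂ} :
    f ∈ (evalMap Z j).range ↔
      ∃ F : MvPolynomial (Fin N) ℂ, F.IsHomogeneous j ∧ ∀ z : Z, eval (z : Fin N → ℂ) F = f z := by
  constructor
  · rintro ⟨F, rfl⟩
    exact ⟨F, F.2, evalMap_apply Z j F⟩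
  · rintro ⟨F, hF, hFf⟩
    refine ⟨⟨F, hF⟩, funext fun z => ?_⟩
    rw [evalMap_apply]
    exact hFf z

lemma hilb_natCast (Z : Finset (Fin N → ℂ)) (j : ℕ) :
    hilb Z j = Module.finrank ℂ (evalMap Z j).range := by
  simp [hilb]

lemma Dhilb_natCast_add_one (Z : Finset (Fin N → ℂ)) (j : ℕ) :
    Dhilb Z ((j : ℤ) + 1) =
      Module.finrank ℂ (evalMap Z (j + 1)).range - Module.finrank ℂ (evalMap Z j).range := by
  rw [Dhilb, add_sub_cancel_right, ← hilb_natCast, ← hilb_natCast, Nat.cast_succ]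

lemma dotProduct_pow_mem_range_evalMap (Z : Finset (Fin N → ℂ)) (j : ℕ) (u : Fin N → ℂ) :
    (fun z : Z => (u ⬝ᵥ z) ^ j) ∈ (evalMap Z j).range :=
  mem_range_evalMap.2 ⟨linForm u ^ j, by simpa using (isHomogeneous_linForm u).pow j,
    fun z => by rw [map_pow, eval_linForm]⟩

lemma dotProduct_mul_mem_range_evalMap {Z : Finset (Fin N → ℂ)} {j : ℕ} (u : Fin N → ℂ)
    {f : Z → ℂ} (hf : f ∈ (evalMap Z j).range) :
    (fun z : Z => u ⬝ᵥ z) * f ∈ (evalMap Z (j + 1)).range := by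
  obtain ⟨F, hF, hFf⟩ := mem_range_evalMap.1 hf
  refine mem_range_evalMap.2 ⟨linForm u * F, ?_, fun z => ?_⟩
  · simpa [add_comm] using (isHomogeneous_linForm u).mul hF
  · rw [map_mul, eval_linForm, hFf, Pi.mul_apply]

end Evaluation

section Separation

variable {N : ℕ} {Z : Finset (Fin N → ℂ)} {j : ℕ}

lemma dotProduct_div_mul_mem_range_evalMap
    (hle : Module.finrank ℂ (evalMap Z (j + 1)).range ≤ Module.finrank ℂ (evalMap Z j).range)
    {u₀ : Fin N → ℂ} (hu₀ : ∀ z ∈ Z, u₀ ⬝ᵥ z ≠ 0) (u : Fin N → ℂ) {f : Z → ℂ}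
    (hf : f ∈ (evalMap Z j).range) :
    (fun z : Z => u ⬝ᵥ z / u₀ ⬝ᵥ z) * f ∈ (evalMap Z j).range := by
  set g : Z → ℂ := fun z => u₀ ⬝ᵥ z
  have hg : IsUnit g := Pi.isUnit_iff.2 fun z => (hu₀ z z.2).isUnit
  have hmap : (evalMap Z j).range.map (LinearMap.mulLeft ℂ g) = (evalMap Z (j + 1)).range := by
    refine Submodule.eq_of_le_of_finrank_le ?_ ?_
    · rintro _ ⟨f', hf', rfl⟩
      exact dotProduct_mul_mem_range_evalMap u₀ hf'
    · rw [← LinearEquiv.finrank_eq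
        (Submodule.equivMapOfInjective _ hg.mul_right_injective _)]
      exact hle
  obtain ⟨f', hf', hgf'⟩ := hmap ▸ dotProduct_mul_mem_range_evalMap u hf
  suffices (fun z : Z => u ⬝ᵥ z / u₀ ⬝ᵥ z) * f = f' from this ▸ hf'
  funext z
  have hz := congrFun hgf' z
  simp only [LinearMap.mulLeft_apply, Pi.mul_apply, g] at hz
  rw [Pi.mul_apply, div_mul_eq_mul_div, ← hz, mul_div_cancel_left₀ _ (hu₀ z z.2)]

lemma exists_isHomogeneous_eval_ne_zero_of_finrank_le (hZ : ValidPoints Z)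
    (hle : Module.finrank ℂ (evalMap Z (j + 1)).range ≤ Module.finrank ℂ (evalMap Z j).range)
    {z₀ : Fin N → ℂ} (hz₀ : z₀ ∈ Z) :
    ∃ F : MvPolynomial (Fin N) ℂ, F.IsHomogeneous j ∧ eval z₀ F ≠ 0 ∧
      ∀ z ∈ Z.erase z₀, eval z F = 0 := by
  obtain ⟨u₀, hu₀⟩ := exists_dotProduct_ne_zero Z hZ.1
  have hsep : ∀ z ∈ Z.erase z₀, ∃ w : Fin N → ℂ, w ⬝ᵥ z = 0 ∧ w ⬝ᵥ z₀ ≠ 0 := fun z hz =>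
    exists_dotProduct_eq_zero_ne_zero
      (hZ.2 z (Finset.mem_of_mem_erase hz) z₀ hz₀ (Finset.ne_of_mem_erase hz))
  choose! w hw hwz₀ using hsep
  -- `f` vanishes off `z₀` because its factor indexed by `z` vanishes at `z`.
  set f : Z → ℂ := (∏ z ∈ Z.erase z₀, fun y : Z => w z ⬝ᵥ y / u₀ ⬝ᵥ y) *
    fun y : Z => (u₀ ⬝ᵥ y) ^ j
  have hf : f ∈ (evalMap Z j).range :=
    Submodule.prod_mul_mem _ _ (fun z _ _ => dotProduct_div_mul_mem_range_evalMap hle hu₀ (w z))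
      (dotProduct_pow_mem_range_evalMap Z j u₀)
  obtain ⟨F, hF, hFf⟩ := mem_range_evalMap.1 hf
  refine ⟨F, hF, ?_, fun z hz => ?_⟩
  · rw [hFf ⟨z₀, hz₀⟩]
    simp only [f, Pi.mul_apply, Finset.prod_apply]
    exact mul_ne_zero (Finset.prod_ne_zero_iff.2 fun z hz =>
      div_ne_zero (hwz₀ z hz) (hu₀ z₀ hz₀)) (pow_ne_zero _ (hu₀ z₀ hz₀))
  · rw [hFf ⟨z, Finset.mem_of_mem_erase hz⟩]
    simp only [f, Pi.mul_apply, Finset.prod_apply]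
    exact mul_eq_zero_of_left (Finset.prod_eq_zero hz (by simp [hw z hz])) _

end Separation

section Apolarity

variable {N d : ℕ}

/-- The apolarity pairing with `F`, normalised so that `⟨F, L_z^d⟩ = F(z)` for `F` of
degree `d`. -/
noncomputable def apolar (F : MvPolynomial (Fin N) ℂ) : MvPolynomial (Fin N) ℂ →ₗ[ℂ] ℂ :=
  ∑ α ∈ F.support, (coeff α F / α.multinomial) • lcoeff ℂ α

lemma coeff_linForm_pow (v : Fin N → ℂ) (α : Fin N →₀ ℕ) :
    coeff α (linForm v ^ d) =
      if (α.sum fun _ m => m) = d then α.multinomial * α.prod fun i m => v i ^ m else 0 := by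
  simp only [linForm, ← smul_eq_C_mul, coeff_linearCombination_X_pow_of_fintype]

lemma apolar_linForm_pow {F : MvPolynomial (Fin N) ℂ} (hF : F.IsHomogeneous d)
    (z : Fin N → ℂ) : apolar F (linForm z ^ d) = eval z F := by
  rw [apolar, LinearMap.sum_apply, eval_eq]
  refine Finset.sum_congr rfl fun α hα => ?_
  have hdeg : (α.sum fun _ m => m) = d := (hF.degree_eq_sum_deg_support hα).symm
  have hmult : (α.multinomial : ℂ) ≠ 0 := Nat.cast_ne_zero.2 (Nat.multinomial_pos _ _).ne'
  rw [LinearMap.smul_apply, lcoeff_apply, coeff_linForm_pow, if_pos hdeg, smul_eq_mul,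
    Finsupp.prod]
  field_simp

lemma apolar_eq_zero_of_computes {F : MvPolynomial (Fin N) ℂ} (hF : F.IsHomogeneous d)
    {S : Finset (Fin N → ℂ)} {T : MvPolynomial (Fin N) ℂ} (hT : Computes S d T)
    (hS : ∀ v ∈ S, eval v F = 0) : apolar F T = 0 := by
  refine (Submodule.span_le.2 ?_ : _ ≤ LinearMap.ker (apolar F)) hT
  rintro _ ⟨v, hv, rfl⟩
  simp [apolar_linForm_pow hF, hS v hv]

lemma Computes.erase {A : Finset (Fin N → ℂ)} {T F : MvPolynomial (Fin N) ℂ}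
    (hA : Computes A d T) (hF : F.IsHomogeneous d) {a : Fin N → ℂ} (ha : a ∈ A)
    (hFa : eval a F ≠ 0) (hFA : ∀ v ∈ A.erase a, eval v F = 0) (hT : apolar F T = 0) :
    Computes (A.erase a) d T := by
  rw [Computes, ← Finset.insert_erase ha, Finset.coe_insert, Set.image_insert_eq] at hA
  refine Submodule.mem_span_of_mem_span_insert_of_apply_eq_zero (apolar F) hA ?_ ?_ hT
  · exact fun P hP => apolar_eq_zero_of_computes hF hP hFA
  · rwa [apolar_linForm_pow hF]

end Apolarity

section Points

variable {N : ℕ}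

lemma ProjDisjoint.ne {A B : Finset (Fin N → ℂ)} (hAB : ProjDisjoint A B) {v w : Fin N → ℂ}
    (hv : v ∈ A) (hw : w ∈ B) : w ≠ v := by
  simpa using hAB v hv w hw 1

lemma ValidPoints.union {A B : Finset (Fin N → ℂ)} (hA : ValidPoints A) (hB : ValidPoints B)
    (hAB : ProjDisjoint A B) : ValidPoints (A ∪ B) := by
  refine ⟨fun v hv => (Finset.mem_union.1 hv).elim (hA.1 v) (hB.1 v), ?_⟩
  intro v hv w hw hvw c hwv
  rcases Finset.mem_union.1 hv with hv | hv <;> rcases Finset.mem_union.1 hw with hw | hw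
  · exact hA.2 v hv w hw hvw c hwv
  · exact hAB v hv w hw c hwv
  · have hc : c ≠ 0 := by
      rintro rfl
      exact hA.1 w hw (by simpa using hwv)
    exact hAB w hw v hv c⁻¹ (by rw [hwv, smul_smul, inv_mul_cancel₀ hc, one_smul])
  · exact hB.2 v hv w hw hvw c hwv

lemma Computes.nonempty {A : Finset (Fin N → ℂ)} {d : ℕ} {T : MvPolynomial (Fin N) ℂ}
    (hA : Computes A d T) (hT : T ≠ 0) : A.Nonempty := by
  rw [Finset.nonempty_iff_ne_empty]
  rintro rfl
  simp [Computes, hT] at hA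

end Points

theorem stmt_1_general {n d : ℕ} (T : MvPolynomial (Fin (n + 1)) ℂ)
    (hT0 : T ≠ 0)
    (A B : Finset (Fin (n + 1) → ℂ)) (hA : ValidPoints A) (hB : ValidPoints B)
    (hAB : ProjDisjoint A B)
    (hAnr : NonRedundant A d T) (hBnr : NonRedundant B d T) :
    0 < Dhilb (A ∪ B) ((d : ℤ) + 1) := by
  rw [Dhilb_natCast_add_one, sub_pos, Nat.cast_lt]
  by_contra! hle
  obtain ⟨a, ha⟩ := hAnr.1.nonempty hT0
  obtain ⟨F, hF, hFa, hF0⟩ := exists_isHomogeneous_eval_ne_zero_of_finrank_le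
    (hA.union hB hAB) hle (Finset.mem_union_left B ha)
  have hFB : apolar F T = 0 := apolar_eq_zero_of_computes hF hBnr.1 fun b hb =>
    hF0 b (Finset.mem_erase.2 ⟨hAB.ne ha hb, Finset.mem_union_right A hb⟩)
  refine hAnr.2 _ (Finset.erase_ssubset ha) (hAnr.1.erase hF ha hFa (fun v hv => ?_) hFB)
  exact hF0 v (Finset.erase_subset_erase a Finset.subset_union_left hv)

/-- if `A, B` are disjoint non-redundant decompositions of a nonzero form `T`
of degree `d`, then `Dh_Z(d+1) > 0` for `Z = A ∪ B`. -/
theorem stmt_1 {n d : ℕ} (T : MvPolynomial (Fin (n + 1)) ℂ)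
    (hT : T.IsHomogeneous d) (hT0 : T ≠ 0)
    (A B : Finset (Fin (n + 1) → ℂ)) (hA : ValidPoints A) (hB : ValidPoints B)
    (hAB : ProjDisjoint A B)
    (hAnr : NonRedundant A d T) (hBnr : NonRedundant B d T) :
    0 < Dhilb (A ∪ B) ((d : ℤ) + 1) :=
  stmt_1_general T hT0 A B hA hB hAB hAnr hBnr
end

section
/- Let T ∈ R_d be a ternary form of degree d and let A, B ⊂ ℙ² be disjoint, non-redundant finite sets computing T. Then Z = A ∪ B satisfies the Cayley–Bacharach property CB(d). -/
open MvPolynomial BigOperators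

/-!
The apolarity pairing `⟨F, G⟩ = ∑ₘ m! F_m G_m` (with `m! = ∏ᵢ mᵢ!`) satisfies
`⟨F, L_w^d⟩ = d! F(w)` for a form `F` of degree `d`. If `F` vanishes on `(A ∪ B) ∖ {P}` with
`P ∈ A`, pairing `F` with a decomposition of `T` over `B` gives `⟨F, T⟩ = 0`, while pairing it
with one over `A` gives `⟨F, T⟩ = c_P d! F(P)`, where `c_P ≠ 0` by non-redundancy of `A`.
Hence `F(P) = 0`.
-/

open scoped Nat

namespace MvPolynomial

variable {σ R : Type*} [CommSemiring R]

noncomputable def apolarFunctional (F : MvPolynomial σ R) : MvPolynomial σ R →ₗ[R] R :=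
  ∑ m ∈ F.support, (coeff m F * ∏ i ∈ m.support, ((m i)! : R)) • lcoeff R m

theorem apolarFunctional_apply (F G : MvPolynomial σ R) :
    apolarFunctional F G =
      ∑ m ∈ F.support, coeff m F * (∏ i ∈ m.support, ((m i)! : R)) * coeff m G := by
  simp [apolarFunctional, LinearMap.sum_apply, mul_assoc]

theorem apolarFunctional_sum_smul_X_pow [Fintype σ] {F : MvPolynomial σ R} {d : ℕ}
    (hF : F.IsHomogeneous d) (a : σ → R) :
    apolarFunctional F ((∑ i, a i • X i) ^ d) = d ! * eval a F := by
  rw [apolarFunctional_apply, eval_eq, Finset.mul_sum]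
  refine Finset.sum_congr rfl fun m hm => ?_
  have hdeg : m.sum (fun _ k => k) = d := (hF.degree_eq_sum_deg_support hm).symm
  have hspec : (∏ i ∈ m.support, ((m i)! : R)) * (m.multinomial : R) = (d ! : R) := by
    rw [← hdeg, Finsupp.multinomial_eq, Finsupp.sum]
    exact_mod_cast congrArg (Nat.cast : ℕ → R) (Nat.multinomial_spec m.support m)
  rw [coeff_linearCombination_X_pow_of_fintype, if_pos hdeg, Finsupp.prod, ← hspec]
  ring

end MvPolynomial

theorem linForm_eq_sum_smul_X {N : ℕ} (v : Fin N → ℂ) : linForm v = ∑ i, v i • X i := by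
  simp [linForm, smul_eq_C_mul]

theorem apolarFunctional_linForm_pow {N d : ℕ} {F : MvPolynomial (Fin N) ℂ}
    (hF : F.IsHomogeneous d) (v : Fin N → ℂ) :
    apolarFunctional F (linForm v ^ d) = d ! * eval v F := by
  rw [linForm_eq_sum_smul_X, apolarFunctional_sum_smul_X_pow hF]

theorem apolarFunctional_eq_zero_of_computes {N d : ℕ} {T F : MvPolynomial (Fin N) ℂ}
    {B : Finset (Fin N → ℂ)} (hF : F.IsHomogeneous d) (hB : Computes B d T)
    (hvan : ∀ v ∈ B, eval v F = 0) :
    apolarFunctional F T = 0 := by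
  refine (Submodule.span_le (p := LinearMap.ker (apolarFunctional F))).mpr ?_ hB
  rintro _ ⟨v, hv, rfl⟩
  simp [apolarFunctional_linForm_pow hF, hvan v hv]

theorem Computes.exists_eq_smul_add {N d : ℕ} {T : MvPolynomial (Fin N) ℂ}
    {A : Finset (Fin N → ℂ)} (hA : Computes A d T) {P : Fin N → ℂ} (hP : P ∈ A) :
    ∃ c : ℂ, ∃ T', Computes (A.erase P) d T' ∧ T = c • linForm P ^ d + T' := by
  rwa [Computes, ← Finset.insert_erase hP, Finset.coe_insert, Set.image_insert_eq,
    Submodule.mem_span_insert] at hA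

theorem NonRedundant.eval_eq_zero {N d : ℕ} {T F : MvPolynomial (Fin N) ℂ}
    {A B : Finset (Fin N → ℂ)} (hA : NonRedundant A d T) (hB : Computes B d T)
    {P : Fin N → ℂ} (hPA : P ∈ A) (hPB : P ∉ B) (hF : F.IsHomogeneous d)
    (hvan : ∀ v ∈ (A ∪ B).erase P, eval v F = 0) :
    eval P F = 0 := by
  obtain ⟨c, T', hT', rfl⟩ := hA.1.exists_eq_smul_add hPA
  have hc : c ≠ 0 := by
    rintro rfl
    exact hA.2 _ (Finset.erase_ssubset hPA) (by simpa using hT')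
  have hpairB := apolarFunctional_eq_zero_of_computes hF hB fun v hv =>
    hvan v (Finset.mem_erase.mpr ⟨fun h => hPB (h ▸ hv), Finset.mem_union_right _ hv⟩)
  have hpairT' := apolarFunctional_eq_zero_of_computes hF hT' fun v hv =>
    hvan v (Finset.erase_subset_erase _ Finset.subset_union_left hv)
  rw [map_add, hpairT', map_smul, apolarFunctional_linForm_pow hF, smul_eq_mul, add_zero] at hpairB
  simpa [hc, Nat.factorial_ne_zero] using hpairB

theorem ProjDisjoint.disjoint {N : ℕ} {A B : Finset (Fin N → ℂ)} (h : ProjDisjoint A B) :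
    Disjoint A B :=
  Finset.disjoint_left.mpr fun v hvA hvB => h v hvA v hvB 1 (one_smul ℂ v).symm

theorem stmt_15_general {d : ℕ} (T : MvPolynomial (Fin 3) ℂ)
    (A B : Finset (Fin 3 → ℂ))
    (hAB : ProjDisjoint A B)
    (hAnr : NonRedundant A d T) (hBnr : NonRedundant B d T) :
    CayleyBacharach (A ∪ B) d := by
  intro P hP F hF hvan
  rcases Finset.mem_union.mp hP with hPA | hPB
  · exact hAnr.eval_eq_zero hBnr.1 hPA (Finset.disjoint_left.mp hAB.disjoint hPA) hF hvan
  · rw [Finset.union_comm] at hvan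
    exact hBnr.eval_eq_zero hAnr.1 hPB (Finset.disjoint_right.mp hAB.disjoint hPB) hF hvan

/-- if `A, B` are disjoint non-redundant decompositions of a ternary form of
degree `d`, then `Z = A ∪ B` satisfies the Cayley–Bacharach property `CB(d)`. -/
theorem stmt_15 {d : ℕ} (T : MvPolynomial (Fin 3) ℂ) (hT : T.IsHomogeneous d)
    (A B : Finset (Fin 3 → ℂ)) (hA : ValidPoints A) (hB : ValidPoints B)
    (hAB : ProjDisjoint A B)
    (hAnr : NonRedundant A d T) (hBnr : NonRedundant B d T) :
    CayleyBacharach (A ∪ B) d :=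
  stmt_15_general T A B hAB hAnr hBnr
end
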